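/- The simplicial complex Δ_3^t(W_9), whose facets are {1,2,4,5,7,8}, {0,2,3,5,6,8}, {0,1,3,4,6,7} in ZMod 9, has first simplicial homology H_1 ≅ ℤ and trivial reduced homology in all other degrees (it is homotopy equivalent to the circle S^1). -/

import Mathlib

/-- The geometric realization of the simplicial complex on `ZMod 9` generated by the
facets `{1,2,4,5,7,8}`, `{0,2,3,5,6,8}`, `{0,1,3,4,6,7}`, as a subspace of `ZMod 9 → ℝ`. -/
def realizationW9 : Set (ZMod 9 → ℝ) :=
  {f | (∀ i, 0 ≤ f i) ∧ (∑ i, f i) = 1 ∧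
    ∃ F ∈ ({({1, 2, 4, 5, 7, 8} : Finset (ZMod 9)), {0, 2, 3, 5, 6, 8},
        {0, 1, 3, 4, 6, 7}} : Set (Finset (ZMod 9))),
      ∀ i, f i ≠ 0 → i ∈ F}

noncomputable section
namespace W9aux

def p0 (f : ZMod 9 → ℝ) : ℝ := f 0 + f 3 + f 6
def p1 (f : ZMod 9 → ℝ) : ℝ := f 1 + f 4 + f 7
def p2 (f : ZMod 9 → ℝ) : ℝ := f 2 + f 5 + f 8

def zc (f : ZMod 9 → ℝ) : ℂ := (↑(p0 f - 1/3) : ℂ) + ↑(p1 f - 1/3) * Complex.I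

def mm (u : ℂ) : ℝ := min u.re (min u.im (-u.re - u.im))
def tt (u : ℂ) : ℝ := -1 / (3 * mm u)
def gg (u : ℂ) : ZMod 9 → ℝ := fun i =>
  if i = 0 then 1/3 + tt u * u.re
  else if i = 1 then 1/3 + tt u * u.im
  else if i = 2 then 1/3 + tt u * (-u.re - u.im) else 0

def sg (f : ZMod 9 → ℝ) : ZMod 9 → ℝ := fun i =>
  if i = 0 then p0 f else if i = 1 then p1 f else if i = 2 then p2 f else 0

lemma sum_expand (f : ZMod 9 → ℝ) :
    ∑ i, f i = f 0 + f 1 + f 2 + f 3 + f 4 + f 5 + f 6 + f 7 + f 8 := by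
  have h : (Finset.univ : Finset (ZMod 9)) = {0,1,2,3,4,5,6,7,8} := by decide
  rw [h]
  repeat rw [Finset.sum_insert (by decide)]
  rw [Finset.sum_singleton]; ring

lemma zc_re (f : ZMod 9 → ℝ) : (zc f).re = p0 f - 1/3 := by simp [zc]
lemma zc_im (f : ZMod 9 → ℝ) : (zc f).im = p1 f - 1/3 := by simp [zc]

lemma gg0 (u : ℂ) : gg u 0 = 1/3 + tt u * u.re := by simp [gg]
lemma gg1 (u : ℂ) : gg u 1 = 1/3 + tt u * u.im := by
  unfold gg; rw [if_neg (by decide), if_pos rfl]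
lemma gg2 (u : ℂ) : gg u 2 = 1/3 + tt u * (-u.re - u.im) := by
  unfold gg; rw [if_neg (by decide), if_neg (by decide), if_pos rfl]
lemma gg_other (u : ℂ) (i : ZMod 9) (h0 : i ≠ 0) (h1 : i ≠ 1) (h2 : i ≠ 2) :
    gg u i = 0 := by simp [gg, h0, h1, h2]

lemma sg0 (f : ZMod 9 → ℝ) : sg f 0 = p0 f := by simp [sg]
lemma sg1 (f : ZMod 9 → ℝ) : sg f 1 = p1 f := by
  unfold sg; rw [if_neg (by decide), if_pos rfl]
lemma sg2 (f : ZMod 9 → ℝ) : sg f 2 = p2 f := by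
  unfold sg; rw [if_neg (by decide), if_neg (by decide), if_pos rfl]
lemma sg_other (f : ZMod 9 → ℝ) (i : ZMod 9) (h0 : i ≠ 0) (h1 : i ≠ 1) (h2 : i ≠ 2) :
    sg f i = 0 := by simp [sg, h0, h1, h2]

-- facts about members of the realization
lemma p_nonneg (f : ZMod 9 → ℝ) (hf : f ∈ realizationW9) :
    0 ≤ p0 f ∧ 0 ≤ p1 f ∧ 0 ≤ p2 f := by
  obtain ⟨hpos, -, -⟩ := hf
  refine ⟨add_nonneg (add_nonneg (hpos 0) (hpos 3)) (hpos 6),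
    add_nonneg (add_nonneg (hpos 1) (hpos 4)) (hpos 7),
    add_nonneg (add_nonneg (hpos 2) (hpos 5)) (hpos 8)⟩

lemma p_sum (f : ZMod 9 → ℝ) (hf : f ∈ realizationW9) : p0 f + p1 f + p2 f = 1 := by
  obtain ⟨-, hs, -⟩ := hf
  rw [sum_expand] at hs
  unfold p0 p1 p2; linarith

lemma facet_cases (f : ZMod 9 → ℝ) (hf : f ∈ realizationW9) :
    (p0 f = 0 ∧ ∀ i, f i ≠ 0 → i ∈ ({1, 2, 4, 5, 7, 8} : Finset (ZMod 9))) ∨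
    (p1 f = 0 ∧ ∀ i, f i ≠ 0 → i ∈ ({0, 2, 3, 5, 6, 8} : Finset (ZMod 9))) ∨
    (p2 f = 0 ∧ ∀ i, f i ≠ 0 → i ∈ ({0, 1, 3, 4, 6, 7} : Finset (ZMod 9))) := by
  obtain ⟨hpos, -, F, hF, hsupp⟩ := hf
  have hzero : ∀ (i : ZMod 9), i ∉ F → f i = 0 := fun i hi => by
    by_contra h; exact hi (hsupp i h)
  simp only [Set.mem_insert_iff, Set.mem_singleton_iff] at hF
  rcases hF with h | h | h <;> subst h
  · left
    refine ⟨?_, hsupp⟩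
    have h0 := hzero 0 (by decide); have h3 := hzero 3 (by decide)
    have h6 := hzero 6 (by decide)
    unfold p0; linarith
  · right; left
    refine ⟨?_, hsupp⟩
    have h0 := hzero 1 (by decide); have h3 := hzero 4 (by decide)
    have h6 := hzero 7 (by decide)
    unfold p1; linarith
  · right; right
    refine ⟨?_, hsupp⟩
    have h0 := hzero 2 (by decide); have h3 := hzero 5 (by decide)
    have h6 := hzero 8 (by decide)
    unfold p2; linarith

lemma zc_ne (f : ZMod 9 → ℝ) (hf : f ∈ realizationW9) : zc f ≠ 0 := by
  intro h
  have hre : p0 f - 1/3 = 0 := by rw [← zc_re f, h]; simp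
  have him : p1 f - 1/3 = 0 := by rw [← zc_im f, h]; simp
  have hs := p_sum f hf
  rcases facet_cases f hf with ⟨h0, -⟩ | ⟨h0, -⟩ | ⟨h0, -⟩ <;> linarith


lemma mm_le_re (u : ℂ) : mm u ≤ u.re := min_le_left _ _
lemma mm_le_im (u : ℂ) : mm u ≤ u.im := le_trans (min_le_right _ _) (min_le_left _ _)
lemma mm_le_third (u : ℂ) : mm u ≤ -u.re - u.im :=
  le_trans (min_le_right _ _) (min_le_right _ _)

lemma mm_neg (u : ℂ) (hu : u ≠ 0) : mm u < 0 := by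
  by_contra h
  push_neg at h
  have h1 : 0 ≤ u.re := le_trans h (mm_le_re u)
  have h2 : 0 ≤ u.im := le_trans h (mm_le_im u)
  have h3 : 0 ≤ -u.re - u.im := le_trans h (mm_le_third u)
  exact hu (Complex.ext (by dsimp; linarith) (by dsimp; linarith))

lemma tt_pos (u : ℂ) (hu : u ≠ 0) : 0 < tt u := by
  have := mm_neg u hu
  unfold tt
  have h3 : (3:ℝ) * mm u < 0 := by linarith
  exact div_pos_of_neg_of_neg (by norm_num) h3

lemma tt_mul_mm (u : ℂ) (hu : u ≠ 0) : tt u * mm u = -(1/3) := by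
  have hm := (mm_neg u hu).ne
  unfold tt
  field_simp

lemma gg_mem (u : ℂ) (hu : u ≠ 0) : gg u ∈ realizationW9 := by
  have hm := mm_neg u hu
  have ht := tt_pos u hu
  have htm := tt_mul_mm u hu
  have key : ∀ a : ℝ, mm u ≤ a → 0 ≤ 1/3 + tt u * a := by
    intro a ha
    nlinarith [mul_le_mul_of_nonneg_left ha ht.le]
  refine ⟨?_, ?_, ?_⟩
  · intro i
    by_cases h0 : i = 0
    · subst h0; rw [gg0]; exact key _ (mm_le_re u)
    by_cases h1 : i = 1
    · subst h1; rw [gg1]; exact key _ (mm_le_im u)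
    by_cases h2 : i = 2
    · subst h2; rw [gg2]; exact key _ (mm_le_third u)
    · rw [gg_other u i h0 h1 h2]
  · rw [sum_expand, gg0, gg1, gg2,
      gg_other u 3 (by decide) (by decide) (by decide),
      gg_other u 4 (by decide) (by decide) (by decide),
      gg_other u 5 (by decide) (by decide) (by decide),
      gg_other u 6 (by decide) (by decide) (by decide),
      gg_other u 7 (by decide) (by decide) (by decide),
      gg_other u 8 (by decide) (by decide) (by decide)]
    ring
  · -- cases on which coordinate achieves the min
    have hcase : mm u = u.re ∨ mm u = u.im ∨ mm u = -u.re - u.im := by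
      unfold mm
      rcases le_total u.re (min u.im (-u.re - u.im)) with h | h
      · left; exact min_eq_left h
      · rcases le_total u.im (-u.re - u.im) with h' | h'
        · right; left; rw [min_eq_right h, min_eq_left h']
        · right; right; rw [min_eq_right h, min_eq_right h']
    rcases hcase with h | h | h
    · refine ⟨{1, 2, 4, 5, 7, 8}, by simp, ?_⟩
      have hz : gg u 0 = 0 := by rw [gg0, ← h]; linarith
      intro i hi
      fin_cases i
      · exact absurd hz hi
      · show (1 : ZMod 9) ∈ _; decide
      · show (2 : ZMod 9) ∈ _; decide
      · exact absurd (gg_other u 3 (by decide) (by decide) (by decide)) hi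
      · show (4 : ZMod 9) ∈ _; decide
      · exact absurd (gg_other u 5 (by decide) (by decide) (by decide)) hi
      · exact absurd (gg_other u 6 (by decide) (by decide) (by decide)) hi
      · show (7 : ZMod 9) ∈ _; decide
      · exact absurd (gg_other u 8 (by decide) (by decide) (by decide)) hi
    · refine ⟨{0, 2, 3, 5, 6, 8}, by simp, ?_⟩
      have hz : gg u 1 = 0 := by rw [gg1, ← h]; linarith
      intro i hi
      fin_cases i
      · show (0 : ZMod 9) ∈ _; decide
      · exact absurd hz hi
      · show (2 : ZMod 9) ∈ _; decide
      · exact absurd (gg_other u 3 (by decide) (by decide) (by decide)) hi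
      · exact absurd (gg_other u 4 (by decide) (by decide) (by decide)) hi
      · exact absurd (gg_other u 5 (by decide) (by decide) (by decide)) hi
      · show (6 : ZMod 9) ∈ _; decide
      · exact absurd (gg_other u 7 (by decide) (by decide) (by decide)) hi
      · exact absurd (gg_other u 8 (by decide) (by decide) (by decide)) hi
    · refine ⟨{0, 1, 3, 4, 6, 7}, by simp, ?_⟩
      have hz : gg u 2 = 0 := by rw [gg2, ← h]; linarith
      intro i hi
      fin_cases i
      · show (0 : ZMod 9) ∈ _; decide
      · show (1 : ZMod 9) ∈ _; decide
      · exact absurd hz hi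
      · exact absurd (gg_other u 3 (by decide) (by decide) (by decide)) hi
      · exact absurd (gg_other u 4 (by decide) (by decide) (by decide)) hi
      · exact absurd (gg_other u 5 (by decide) (by decide) (by decide)) hi
      · exact absurd (gg_other u 6 (by decide) (by decide) (by decide)) hi
      · exact absurd (gg_other u 7 (by decide) (by decide) (by decide)) hi
      · exact absurd (gg_other u 8 (by decide) (by decide) (by decide)) hi


lemma zc_gg (u : ℂ) : zc (gg u) = tt u • u := by
  apply Complex.ext
  · rw [zc_re]
    unfold p0
    rw [gg0, gg_other u 3 (by decide) (by decide) (by decide),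
      gg_other u 6 (by decide) (by decide) (by decide)]
    simp [Complex.real_smul]
  · rw [zc_im]
    unfold p1
    rw [gg1, gg_other u 4 (by decide) (by decide) (by decide),
      gg_other u 7 (by decide) (by decide) (by decide)]
    simp [Complex.real_smul]

lemma FG (u : ℂ) (hu : ‖u‖ = 1) : ‖zc (gg u)‖⁻¹ • zc (gg u) = u := by
  have hu0 : u ≠ 0 := by intro h; rw [h] at hu; simp at hu
  have ht := tt_pos u hu0
  rw [zc_gg u, norm_smul, Real.norm_eq_abs, abs_of_pos ht, hu, mul_one,
    smul_smul, inv_mul_cancel₀ ht.ne', one_smul]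

lemma GF (f : ZMod 9 → ℝ) (hf : f ∈ realizationW9) :
    gg (‖zc f‖⁻¹ • zc f) = sg f := by
  set r := ‖zc f‖ with hr_def
  have hr : 0 < r := norm_pos_iff.mpr (zc_ne f hf)
  set u := r⁻¹ • zc f with hu_def
  have hc : 0 < r⁻¹ := inv_pos.mpr hr
  have hre : u.re = r⁻¹ * (p0 f - 1/3) := by
    rw [hu_def]; simp [Complex.real_smul, zc_re]
  have him : u.im = r⁻¹ * (p1 f - 1/3) := by
    rw [hu_def]; simp [Complex.real_smul, zc_im]
  have hth : -u.re - u.im = r⁻¹ * (p2 f - 1/3) := by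
    have := p_sum f hf
    rw [hre, him]; ring_nf
    nlinarith [this]
  obtain ⟨hp0, hp1, hp2⟩ := p_nonneg f hf
  have hmm : mm u = r⁻¹ * (-(1/3)) := by
    apply le_antisymm
    · rcases facet_cases f hf with ⟨h0, -⟩ | ⟨h0, -⟩ | ⟨h0, -⟩
      · calc mm u ≤ u.re := mm_le_re u
          _ = r⁻¹ * (-(1/3)) := by rw [hre, h0]; ring
      · calc mm u ≤ u.im := mm_le_im u
          _ = r⁻¹ * (-(1/3)) := by rw [him, h0]; ring
      · calc mm u ≤ -u.re - u.im := mm_le_third u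
          _ = r⁻¹ * (-(1/3)) := by rw [hth, h0]; ring
    · unfold mm
      refine le_min ?_ (le_min ?_ ?_)
      · rw [hre]; nlinarith
      · rw [him]; nlinarith
      · rw [hth]; nlinarith
  have htt : tt u = r := by
    unfold tt
    rw [hmm]
    field_simp
  funext i
  by_cases h0 : i = 0
  · subst h0; rw [gg0, sg0, htt, hre]; field_simp; ring
  by_cases h1 : i = 1
  · subst h1; rw [gg1, sg1, htt, him]; field_simp; ring
  by_cases h2 : i = 2
  · subst h2; rw [gg2, sg2, htt, hth]; field_simp; ring
  · rw [gg_other u i h0 h1 h2, sg_other f i h0 h1 h2]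


lemma sum_sg (f : ZMod 9 → ℝ) (hf : f ∈ realizationW9) : ∑ i, sg f i = 1 := by
  rw [sum_expand, sg0, sg1, sg2,
    sg_other f 3 (by decide) (by decide) (by decide),
    sg_other f 4 (by decide) (by decide) (by decide),
    sg_other f 5 (by decide) (by decide) (by decide),
    sg_other f 6 (by decide) (by decide) (by decide),
    sg_other f 7 (by decide) (by decide) (by decide),
    sg_other f 8 (by decide) (by decide) (by decide)]
  have := p_sum f hf
  linarith

lemma sg_nonneg (f : ZMod 9 → ℝ) (hf : f ∈ realizationW9) (i : ZMod 9) : 0 ≤ sg f i := by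
  obtain ⟨h0, h1, h2⟩ := p_nonneg f hf
  by_cases e0 : i = 0
  · subst e0; rw [sg0]; exact h0
  by_cases e1 : i = 1
  · subst e1; rw [sg1]; exact h1
  by_cases e2 : i = 2
  · subst e2; rw [sg2]; exact h2
  · rw [sg_other f i e0 e1 e2]

lemma mix_mem (f : ZMod 9 → ℝ) (hf : f ∈ realizationW9) (s : ℝ) (hs0 : 0 ≤ s)
    (hs1 : s ≤ 1) : (fun i => (1 - s) * sg f i + s * f i) ∈ realizationW9 := by
  obtain ⟨hpos, hsum, -⟩ := id hf
  refine ⟨?_, ?_, ?_⟩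
  · intro i
    have := sg_nonneg f hf i
    have := hpos i
    dsimp only
    nlinarith
  · have hdist : (∑ i, ((1 - s) * sg f i + s * f i)) =
        (1 - s) * (∑ i, sg f i) + s * (∑ i, f i) := by
      rw [Finset.sum_add_distrib, ← Finset.mul_sum, ← Finset.mul_sum]
    rw [hdist, sum_sg f hf, hsum]; ring
  · have hterm : ∀ i, (1 - s) * sg f i + s * f i ≠ 0 → sg f i ≠ 0 ∨ f i ≠ 0 := by
      intro i hi
      by_contra h
      push_neg at h
      exact hi (by rw [h.1, h.2]; ring)
    rcases facet_cases f hf with ⟨h0, hF⟩ | ⟨h0, hF⟩ | ⟨h0, hF⟩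
    · refine ⟨{1, 2, 4, 5, 7, 8}, by simp, ?_⟩
      intro i hi
      rcases hterm i hi with hsg | hfi
      · by_cases e0 : i = 0
        · exact absurd (by rw [e0, sg0]; exact h0) hsg
        by_cases e1 : i = 1
        · subst e1; decide
        by_cases e2 : i = 2
        · subst e2; decide
        · exact absurd (sg_other f i e0 e1 e2) hsg
      · exact hF i hfi
    · refine ⟨{0, 2, 3, 5, 6, 8}, by simp, ?_⟩
      intro i hi
      rcases hterm i hi with hsg | hfi
      · by_cases e0 : i = 0
        · subst e0; decide
        by_cases e1 : i = 1
        · exact absurd (by rw [e1, sg1]; exact h0) hsg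
        by_cases e2 : i = 2
        · subst e2; decide
        · exact absurd (sg_other f i e0 e1 e2) hsg
      · exact hF i hfi
    · refine ⟨{0, 1, 3, 4, 6, 7}, by simp, ?_⟩
      intro i hi
      rcases hterm i hi with hsg | hfi
      · by_cases e0 : i = 0
        · subst e0; decide
        by_cases e1 : i = 1
        · subst e1; decide
        by_cases e2 : i = 2
        · exact absurd (by rw [e2, sg2]; exact h0) hsg
        · exact absurd (sg_other f i e0 e1 e2) hsg
      · exact hF i hfi

-- continuity lemmas
lemma cont_p0 : Continuous p0 :=
  ((continuous_apply (0 : ZMod 9)).add (continuous_apply 3)).add (continuous_apply 6)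
lemma cont_p1 : Continuous p1 :=
  ((continuous_apply (1 : ZMod 9)).add (continuous_apply 4)).add (continuous_apply 7)
lemma cont_p2 : Continuous p2 :=
  ((continuous_apply (2 : ZMod 9)).add (continuous_apply 5)).add (continuous_apply 8)

lemma cont_zc : Continuous zc :=
  (Complex.continuous_ofReal.comp (cont_p0.sub continuous_const)).add
    ((Complex.continuous_ofReal.comp (cont_p1.sub continuous_const)).mul continuous_const)

lemma cont_sg (i : ZMod 9) : Continuous fun f => sg f i := by
  unfold sg
  by_cases e0 : i = 0
  · simp only [e0, if_pos rfl]; exact cont_p0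
  by_cases e1 : i = 1
  · simp only [if_neg e0, e1, if_pos rfl]; exact cont_p1
  by_cases e2 : i = 2
  · simp only [if_neg e0, if_neg e1, e2, if_pos rfl]; exact cont_p2
  · simp only [if_neg e0, if_neg e1, if_neg e2]; exact continuous_const

lemma sphere_ne (u : Metric.sphere (0 : ℂ) 1) : (u : ℂ) ≠ 0 := by
  have h : ‖(u : ℂ)‖ = 1 := mem_sphere_zero_iff_norm.mp u.2
  intro h0
  rw [h0] at h
  simp at h

def Fm : C(realizationW9, Metric.sphere (0 : ℂ) 1) where
  toFun f := ⟨‖zc f.1‖⁻¹ • zc f.1, by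
    rw [mem_sphere_zero_iff_norm, norm_smul, norm_inv, norm_norm,
      inv_mul_cancel₀ (norm_ne_zero_iff.mpr (zc_ne f.1 f.2))]⟩
  continuous_toFun := by
    apply Continuous.subtype_mk
    have h : Continuous fun f : realizationW9 => zc f.1 :=
      cont_zc.comp continuous_subtype_val
    exact ((h.norm.inv₀ fun f => norm_ne_zero_iff.mpr (zc_ne f.1 f.2)).smul h)

def Gm : C(Metric.sphere (0 : ℂ) 1, realizationW9) where
  toFun u := ⟨gg u.1, gg_mem u.1 (sphere_ne u)⟩
  continuous_toFun := by
    apply Continuous.subtype_mk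
    have cre : Continuous fun u : Metric.sphere (0 : ℂ) 1 => (u : ℂ).re :=
      Complex.continuous_re.comp continuous_subtype_val
    have cim : Continuous fun u : Metric.sphere (0 : ℂ) 1 => (u : ℂ).im :=
      Complex.continuous_im.comp continuous_subtype_val
    have cmm : Continuous fun u : Metric.sphere (0 : ℂ) 1 => mm u.1 :=
      cre.min (cim.min (cre.neg.sub cim))
    have ctt : Continuous fun u : Metric.sphere (0 : ℂ) 1 => tt u.1 := by
      apply Continuous.div continuous_const (continuous_const.mul cmm)
      intro u
      have := mm_neg u.1 (sphere_ne u)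
      intro h
      simp only [Pi.mul_apply] at h
      nlinarith
    apply continuous_pi
    intro i
    unfold gg
    by_cases e0 : i = 0
    · simp only [e0, if_pos rfl]
      exact continuous_const.add (ctt.mul cre)
    by_cases e1 : i = 1
    · simp only [if_neg e0, e1, if_pos rfl]
      exact continuous_const.add (ctt.mul cim)
    by_cases e2 : i = 2
    · simp only [if_neg e0, if_neg e1, e2, if_pos rfl]
      exact continuous_const.add (ctt.mul (cre.neg.sub cim))
    · simp only [if_neg e0, if_neg e1, if_neg e2]
      exact continuous_const

def hoLeft : (Gm.comp Fm).Homotopy (ContinuousMap.id realizationW9) where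
  toFun q := ⟨fun i => (1 - (q.1 : ℝ)) * sg (q.2 : ZMod 9 → ℝ) i +
      (q.1 : ℝ) * (q.2 : ZMod 9 → ℝ) i,
    mix_mem _ q.2.2 _ q.1.2.1 q.1.2.2⟩
  continuous_toFun := by
    apply Continuous.subtype_mk
    apply continuous_pi
    intro i
    have ct : Continuous fun q : ↥unitInterval × ↥realizationW9 => (q.1 : ℝ) :=
      continuous_subtype_val.comp continuous_fst
    have cf : Continuous fun q : ↥unitInterval × ↥realizationW9 => (q.2 : ZMod 9 → ℝ) :=
      continuous_subtype_val.comp continuous_snd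
    exact ((continuous_const.sub ct).mul ((cont_sg i).comp cf)).add
      (ct.mul ((continuous_apply i).comp cf))
  map_zero_left x := by
    apply Subtype.ext
    show (fun i => (1 - (0 : ℝ)) * sg (x : ZMod 9 → ℝ) i + (0 : ℝ) * (x : ZMod 9 → ℝ) i)
      = gg (‖zc x.1‖⁻¹ • zc x.1)
    rw [GF x.1 x.2]
    funext i
    ring
  map_one_left x := by
    apply Subtype.ext
    show (fun i => (1 - (1 : ℝ)) * sg (x : ZMod 9 → ℝ) i + (1 : ℝ) * (x : ZMod 9 → ℝ) i)
      = (x : ZMod 9 → ℝ)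
    funext i
    ring

end W9aux

noncomputable def W9equiv :
    ContinuousMap.HomotopyEquiv realizationW9 (Metric.sphere (0 : ℂ) 1) where
  toFun := W9aux.Fm
  invFun := W9aux.Gm
  left_inv := ⟨W9aux.hoLeft⟩
  right_inv := by
    have heq : W9aux.Fm.comp W9aux.Gm = ContinuousMap.id (Metric.sphere (0 : ℂ) 1) := by
      apply ContinuousMap.ext
      intro u
      apply Subtype.ext
      exact W9aux.FG u.1 (mem_sphere_zero_iff_norm.mp u.2)
    rw [heq]

/-- Δ₃ᵗ(W₉) is homotopy equivalent to the circle S¹ (hence H₁ ≅ ℤ and all other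
reduced homology groups vanish). -/
theorem stmt8 : Nonempty (ContinuousMap.HomotopyEquiv realizationW9 (Metric.sphere (0 : ℂ) 1)) :=
  ⟨W9equiv⟩

end
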